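/- Let Σ be a symmetric positive semidefinite n×n matrix satisfying Σ = W + M Σ Mᵀ with W symmetric positive definite and ρ(M) < 1. Then tr(Σ) ≥ σ_min(W) / (2(1 - ρ(M))), where σ_min(W) denotes the smallest eigenvalue of W. -/

import Mathlib

/-! Over `ℂ`, take an eigenvalue `z` of `M` with `‖z‖ = ρ` and a left eigenvector `v`,
`Mᵀ v = z v`. Evaluating the Lyapunov equation at `v` gives `(1 - ρ²) v*Σv = v*Wv`, and the
Loewner bounds `σ_min(W) • 1 ≤ W` and `Σ ≤ tr Σ • 1` turn this into
`σ_min(W) ≤ (1 - ρ²) tr Σ ≤ 2 (1 - ρ) tr Σ`. -/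

open Matrix
open scoped MatrixOrder ComplexOrder

namespace Matrix

variable {n 𝕜 : Type*} [Fintype n] [RCLike 𝕜]

theorem exists_transpose_mulVec_eq_smul_of_isRoot_charpoly {K : Type*} [Field K] [DecidableEq n]
    {N : Matrix n n K} {z : K} (hz : N.charpoly.IsRoot z) : ∃ v ≠ 0, Nᵀ *ᵥ v = z • v := by
  rw [← charpoly_transpose, ← mem_spectrum_iff_isRoot_charpoly, ← spectrum_toLin',
    ← Module.End.hasEigenvalue_iff_mem_spectrum] at hz
  obtain ⟨v, hv⟩ := hz.exists_hasEigenvector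
  exact ⟨v, hv.2, hv.apply_eq_smul⟩

theorem dotProduct_mul_mul_conjTranspose_mulVec {R : Type*} [CommRing R] [StarRing R]
    (N A : Matrix n n R) {v : n → R} {z : R} (hv : Nᴴ *ᵥ v = z • v) :
    star v ⬝ᵥ ((N * A * Nᴴ) *ᵥ v) = star z * z * (star v ⬝ᵥ (A *ᵥ v)) := by
  rw [← mulVec_mulVec, ← mulVec_mulVec, dotProduct_mulVec, ← conjTranspose_conjTranspose N,
    ← star_mulVec, conjTranspose_conjTranspose, hv, star_smul, smul_dotProduct, mulVec_smul,
    dotProduct_smul, smul_eq_mul, smul_eq_mul, mul_assoc]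

omit [Fintype n] in
theorem conjTranspose_map_algebraMap {m : Type*} (A : Matrix m n ℝ) :
    (A.map (algebraMap ℝ 𝕜))ᴴ = Aᵀ.map (algebraMap ℝ 𝕜) := by
  rw [← conjTranspose_eq_transpose_of_trivial, conjTranspose_map]
  intro x
  simp

variable [DecidableEq n]

theorem PosSemidef.map_algebraMap {A : Matrix n n ℝ} (hA : A.PosSemidef) :
    (A.map (algebraMap ℝ 𝕜)).PosSemidef := by
  obtain ⟨B, rfl⟩ := CStarAlgebra.nonneg_iff_eq_star_mul_self.mp hA.nonneg
  rw [star_eq_conjTranspose, Matrix.map_mul, conjTranspose_eq_transpose_of_trivial,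
    ← conjTranspose_map_algebraMap]
  exact posSemidef_conjTranspose_mul_self _

theorem re_dotProduct_map_mulVec_mono {A B : Matrix n n ℝ} (h : A ≤ B) (v : n → 𝕜) :
    RCLike.re (star v ⬝ᵥ (A.map (algebraMap ℝ 𝕜) *ᵥ v)) ≤
      RCLike.re (star v ⬝ᵥ (B.map (algebraMap ℝ 𝕜) *ᵥ v)) := by
  have := (PosSemidef.map_algebraMap (𝕜 := 𝕜) (le_iff.mp h)).re_dotProduct_nonneg v
  rwa [Matrix.map_sub _ (map_sub (algebraMap ℝ 𝕜)), sub_mulVec, dotProduct_sub, map_sub,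
    sub_nonneg] at this

theorem re_dotProduct_map_algebraMap_mulVec (c : ℝ) (v : n → 𝕜) :
    RCLike.re (star v ⬝ᵥ ((algebraMap ℝ (Matrix n n ℝ) c).map (algebraMap ℝ 𝕜) *ᵥ v))
      = c * RCLike.re (star v ⬝ᵥ v) := by
  simp [algebraMap_eq_diagonal, Pi.algebraMap_def, diagonal_map, RCLike.real_smul_eq_coe_mul]

theorem IsHermitian.algebraMap_iInf_eigenvalues_le {A : Matrix n n 𝕜} (hA : A.IsHermitian) :
    algebraMap ℝ (Matrix n n 𝕜) (⨅ i, hA.eigenvalues i) ≤ A := by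
  rw [algebraMap_le_iff_le_spectrum hA.isSelfAdjoint, hA.spectrum_real_eq_range_eigenvalues]
  rintro _ ⟨i, rfl⟩
  exact ciInf_le (Set.finite_range _).bddBelow i

theorem PosSemidef.le_algebraMap_re_trace {A : Matrix n n 𝕜} (hA : A.PosSemidef) :
    A ≤ algebraMap ℝ (Matrix n n 𝕜) (RCLike.re A.trace) := by
  rw [le_algebraMap_iff_spectrum_le hA.isHermitian.isSelfAdjoint,
    hA.isHermitian.spectrum_real_eq_range_eigenvalues, hA.isHermitian.trace_eq_sum_eigenvalues]
  rintro _ ⟨i, rfl⟩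
  simp only [← RCLike.ofReal_sum, RCLike.ofReal_re]
  exact Finset.single_le_sum (fun j _ => hA.eigenvalues_nonneg j) (Finset.mem_univ i)

omit [DecidableEq n] in
theorem re_dotProduct_map_mulVec_lyapunov {M W S : Matrix n n ℝ} (hS : S = W + M * S * Mᵀ)
    {v : n → 𝕜} {z : 𝕜} (hv : (M.map (algebraMap ℝ 𝕜))ᵀ *ᵥ v = z • v) :
    (1 - ‖z‖ ^ 2) * RCLike.re (star v ⬝ᵥ (S.map (algebraMap ℝ 𝕜) *ᵥ v)) =
      RCLike.re (star v ⬝ᵥ (W.map (algebraMap ℝ 𝕜) *ᵥ v)) := by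
  have hv' : (M.map (algebraMap ℝ 𝕜))ᴴ *ᵥ v = z • v := by
    rwa [conjTranspose_map_algebraMap, transpose_map]
  have hS' :=
    congrArg (fun A : Matrix n n ℝ ↦ star v ⬝ᵥ (A.map (algebraMap ℝ 𝕜) *ᵥ v)) hS
  rw [Matrix.map_add _ (map_add _), Matrix.map_mul, Matrix.map_mul,
    ← conjTranspose_map_algebraMap, add_mulVec, dotProduct_add,
    dotProduct_mul_mul_conjTranspose_mulVec _ _ hv', RCLike.star_def, RCLike.conj_mul] at hS'
  have := congrArg RCLike.re hS'
  rw [map_add, ← RCLike.ofReal_pow, RCLike.re_ofReal_mul] at this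
  linarith

end Matrix

theorem stmt_4_general {n : ℕ} (M W Sig : Matrix (Fin n) (Fin n) ℝ)
    (hW : W.PosDef) (hSig : Sig.PosSemidef)
    (hsol : Sig = W + M * Sig * Mᵀ)
    (ρ : ℝ)
    (hρ : IsGreatest {r : ℝ | ∃ z : ℂ, (M.map (algebraMap ℝ ℂ)).charpoly.IsRoot z ∧ ‖z‖ = r} ρ)
    (hρ1 : ρ < 1) :
    (⨅ i, hW.1.eigenvalues i) / (2 * (1 - ρ)) ≤ Sig.trace := by
  obtain ⟨z, hz, rfl⟩ := hρ.1
  obtain ⟨v, hv0, hv⟩ := exists_transpose_mulVec_eq_smul_of_isRoot_charpoly hz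
  set σ := ⨅ i, hW.1.eigenvalues i
  have hv2 : 0 < RCLike.re (star v ⬝ᵥ v) :=
    (RCLike.pos_iff.mp (dotProduct_star_self_pos_iff.mpr hv0)).1
  have hW_ge := re_dotProduct_map_algebraMap_mulVec σ v ▸
    re_dotProduct_map_mulVec_mono hW.1.algebraMap_iInf_eigenvalues_le v
  have hSig_le := re_dotProduct_map_algebraMap_mulVec Sig.trace v ▸
    re_dotProduct_map_mulVec_mono hSig.le_algebraMap_re_trace v
  have hlyap := re_dotProduct_map_mulVec_lyapunov hsol hv
  have hσ : σ ≤ (1 - ‖z‖ ^ 2) * Sig.trace := by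
    have h1z : 0 ≤ 1 - ‖z‖ ^ 2 := by nlinarith [norm_nonneg z]
    refine le_of_mul_le_mul_right ?_ hv2
    nlinarith [mul_le_mul_of_nonneg_left hSig_le h1z]
  rw [div_le_iff₀ (by linarith)]
  nlinarith [mul_nonneg hSig.trace_nonneg (sq_nonneg (1 - ‖z‖))]

/-- If a PSD matrix `Σ` solves the Lyapunov equation `Σ = W + M Σ Mᵀ` with `W` positive
definite and spectral radius `ρ(M) < 1`, then `tr(Σ) ≥ σ_min(W) / (2(1 - ρ(M)))`. -/
theorem stmt_4 {n : ℕ} (hn : 0 < n) (M W Sig : Matrix (Fin n) (Fin n) ℝ)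
    (hW : W.PosDef) (hSig : Sig.PosSemidef)
    (hsol : Sig = W + M * Sig * Mᵀ)
    (ρ : ℝ)
    (hρ : IsGreatest {r : ℝ | ∃ z : ℂ, (M.map (algebraMap ℝ ℂ)).charpoly.IsRoot z ∧ ‖z‖ = r} ρ)
    (hρ1 : ρ < 1) :
    (⨅ i, hW.1.eigenvalues i) / (2 * (1 - ρ)) ≤ Sig.trace :=
  stmt_4_general M W Sig hW hSig hsol ρ hρ hρ1
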